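/- The set {1 − a ∈ \widehat{ℤG}_χ | a ∈ \widehat{ℤG}_χ, ‖a‖ < 1} is a subgroup of the group of units of \widehat{ℤG}_χ: it contains 1, is closed under multiplication, and is closed under taking inverses. -/

import Mathlib

/-!
Write an element of the set as `1 - a`, where `‖a‖ < 1` means that `a` is supported in
`χ ≤ c` for some `c < 0`. Then `aⁿ` is supported in `χ ≤ n c`, so the geometric series `Σ aⁿ`
is locally finite, lies in the Novikov ring and is a right inverse of `1 - a`. By associativity
it is also a left inverse, because `1 - a` is left cancellable: if `v = w + a v`, pick a point of
`supp v` maximising `χ` above a given level (the Novikov condition leaves finitely many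
candidates); there `a v` vanishes, since `a` strictly lowers `χ`. So every bound `χ ≤ d` on the
support of `w` holds on the support of `v`. Products stay in the set since
`(1 - a)(1 - b) = 1 - (a + b - a b)`, and an inverse `v` of `1 - a` satisfies `v = 1 + a v`,
hence is supported in `χ ≤ 0`, so that `1 - v = - a v` is again supported in `χ ≤ c`.
-/

variable {G : Type*}

/-- The Novikov support condition: for every `r : ℝ` the set
`supp(l) ∩ χ⁻¹([r,∞))` is finite.  The Novikov ring `ℤG^` is the set of
functions `l : G → ℤ` satisfying this condition. -/
def NovikovCond [Group G] (χ : G → ℝ) (l : G → ℤ) : Prop :=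
  ∀ r : ℝ, {g : G | l g ≠ 0 ∧ r ≤ χ g}.Finite

/-- Convolution product `(l₁·l₂)(g) = Σ_{h₁h₂=g} l₁(h₁)·l₂(h₂)`. -/
noncomputable def novConv [Group G] (l₁ l₂ : G → ℤ) : G → ℤ :=
  fun g => ∑ᶠ p ∈ {p : G × G | p.1 * p.2 = g}, l₁ p.1 * l₂ p.2

open Classical in
/-- The unit of the Novikov ring: the indicator function of the identity of `G`. -/
noncomputable def novOne [Group G] : G → ℤ :=
  fun g => if g = 1 then 1 else 0

open Classical in
/-- The norm `‖l‖ = exp (sup {χ g | g ∈ supp l})` for `l ≠ 0`, and `‖0‖ = 0`. -/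
noncomputable def novNorm [Group G] (χ : G → ℝ) (l : G → ℤ) : ℝ :=
  if l = 0 then 0 else Real.exp (sSup {x : ℝ | ∃ g : G, l g ≠ 0 ∧ χ g = x})

/-- The set `{1 − a | a ∈ ℤG^_χ, ‖a‖ < 1}`. -/
def novSmallUnits [Group G] (χ : G → ℝ) : Set (G → ℤ) :=
  {u | ∃ a : G → ℤ, NovikovCond χ a ∧ novNorm χ a < 1 ∧ u = novOne - a}


open Function

section Finsum

variable {α β M : Type*} [AddCommMonoid M]

theorem finsum_comm_of_finite (f : α → β → M) (h : (support (uncurry f)).Finite) :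
    ∑ᶠ a, ∑ᶠ b, f a b = ∑ᶠ b, ∑ᶠ a, f a b := by
  have h' : (support (uncurry f ∘ Prod.swap)).Finite :=
    (h.image Prod.swap).subset fun p hp => ⟨p.swap, hp, p.swap_swap⟩
  calc ∑ᶠ a, ∑ᶠ b, f a b = ∑ᶠ p, uncurry f p := (finsum_curry _ h).symm
    _ = ∑ᶠ q : β × α, uncurry f q.swap := (finsum_comp_equiv (Equiv.prodComm β α)).symm
    _ = ∑ᶠ b, ∑ᶠ a, f a b := finsum_curry _ h'

theorem finsum_nat_eq_zero_add (f : ℕ → M) (hf : (support f).Finite) :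
    ∑ᶠ n, f n = f 0 + ∑ᶠ n, f (n + 1) := by
  rw [← add_finsum_cond_ne 0 hf, ← finsum_mem_range (f := f) Nat.succ_injective, Nat.range_succ]
  simp only [Set.mem_ofPred_eq, Nat.pos_iff_ne_zero]

end Finsum

theorem Nat.finite_setOf_le_mul_of_neg {c : ℝ} (hc : c < 0) (x : ℝ) :
    {n : ℕ | x ≤ n * c}.Finite :=
  (Set.finite_Iic ⌊x / c⌋₊).subset fun _ hn => Nat.le_floor ((le_div_iff_of_neg hc).mpr hn)

section SupportedBelow

variable {χ : G → ℝ} {a b : G → ℤ} {c d : ℝ}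

/-- `SupportedBelow χ c l` says `‖l‖ ≤ exp c`. -/
def SupportedBelow (χ : G → ℝ) (c : ℝ) (l : G → ℤ) : Prop :=
  ∀ g, l g ≠ 0 → χ g ≤ c

theorem SupportedBelow.mono (ha : SupportedBelow χ c a) (hcd : c ≤ d) : SupportedBelow χ d a :=
  fun g hg => (ha g hg).trans hcd

theorem SupportedBelow.add (ha : SupportedBelow χ c a) (hb : SupportedBelow χ c b) :
    SupportedBelow χ c (a + b) := fun g hg => by
  by_cases hag : a g = 0
  · exact hb g (by simpa [hag] using hg)
  · exact ha g hag

theorem SupportedBelow.neg (ha : SupportedBelow χ c a) : SupportedBelow χ c (-a) :=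
  fun g hg => ha g (by simpa using hg)

theorem SupportedBelow.sub (ha : SupportedBelow χ c a) (hb : SupportedBelow χ c b) :
    SupportedBelow χ c (a - b) := by
  simpa only [sub_eq_add_neg] using ha.add hb.neg

end SupportedBelow

section Novikov

variable [Group G] {χ : G → ℝ} {a b v w z : G → ℤ} {c d : ℝ}

theorem map_inv_mul_eq_sub (hχ : ∀ g h : G, χ (g * h) = χ g + χ h) (g h : G) :
    χ (h⁻¹ * g) = χ g - χ h := by
  rw [eq_sub_iff_add_eq', ← hχ, mul_inv_cancel_left]

theorem supportedBelow_novOne (hχ : ∀ g h : G, χ (g * h) = χ g + χ h) :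
    SupportedBelow χ 0 (novOne : G → ℤ) := fun g hg => by
  have hg1 : g = 1 := by simpa [novOne] using hg
  simpa [hg1] using (map_inv_mul_eq_sub hχ 1 1).le

theorem NovikovCond.exists_supportedBelow (ha : NovikovCond χ a) : ∃ A, SupportedBelow χ A a := by
  obtain ⟨A, hA⟩ := ((ha 0).image χ).bddAbove
  refine ⟨max A 0, fun g hg => ?_⟩
  rcases le_or_gt 0 (χ g) with h | h
  · exact le_max_of_le_left (hA ⟨g, ⟨hg, h⟩, rfl⟩)
  · exact le_max_of_le_right h.le

theorem NovikovCond.add (ha : NovikovCond χ a) (hb : NovikovCond χ b) :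
    NovikovCond χ (a + b) := fun r =>
  ((ha r).union (hb r)).subset fun g ⟨hg, hr⟩ => by
    by_cases hag : a g = 0
    · exact Or.inr ⟨by simpa [hag] using hg, hr⟩
    · exact Or.inl ⟨hag, hr⟩

theorem NovikovCond.neg (ha : NovikovCond χ a) : NovikovCond χ (-a) := by
  simpa [NovikovCond] using ha

theorem NovikovCond.sub (ha : NovikovCond χ a) (hb : NovikovCond χ b) :
    NovikovCond χ (a - b) := by
  simpa only [sub_eq_add_neg] using ha.add hb.neg

theorem novikovCond_zero : NovikovCond χ (0 : G → ℤ) := fun r => by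
  simp

theorem novikovCond_novOne : NovikovCond χ (novOne : G → ℤ) := fun _ =>
  (Set.finite_singleton 1).subset fun g ⟨hg, _⟩ => by simpa [novOne] using hg

theorem novConv_apply (a b : G → ℤ) (g : G) : novConv a b g = ∑ᶠ h, a h * b (h⁻¹ * g) := by
  have hrange : {p : G × G | p.1 * p.2 = g} = Set.range fun h => (h, h⁻¹ * g) := by
    ext ⟨h, k⟩
    simp [eq_inv_mul_iff_mul_eq, eq_comm]
  rw [novConv, hrange, finsum_mem_range fun h k hhk => congrArg Prod.fst hhk]

theorem exists_ne_zero_of_novConv_ne_zero {g : G} (hg : novConv a b g ≠ 0) :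
    ∃ h, a h ≠ 0 ∧ b (h⁻¹ * g) ≠ 0 := by
  rw [novConv_apply] at hg
  obtain ⟨h, hh⟩ := not_forall.mp (mt finsum_eq_zero_of_forall_eq_zero hg)
  exact ⟨h, left_ne_zero_of_mul hh, right_ne_zero_of_mul hh⟩

theorem NovikovCond.finite_support_novConv_summand (hχ : ∀ g h : G, χ (g * h) = χ g + χ h)
    (ha : NovikovCond χ a) (hb : SupportedBelow χ c b) (g : G) :
    (support fun h => a h * b (h⁻¹ * g)).Finite :=
  (ha (χ g - c)).subset fun h hh => by
    have hχb := hb _ (right_ne_zero_of_mul hh)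
    rw [map_inv_mul_eq_sub hχ] at hχb
    exact ⟨left_ne_zero_of_mul hh, by linarith⟩

theorem SupportedBelow.conv (hχ : ∀ g h : G, χ (g * h) = χ g + χ h)
    (ha : SupportedBelow χ c a) (hb : SupportedBelow χ d b) :
    SupportedBelow χ (c + d) (novConv a b) := fun g hg => by
  obtain ⟨h, hah, hbh⟩ := exists_ne_zero_of_novConv_ne_zero hg
  have hχb := hb _ hbh
  rw [map_inv_mul_eq_sub hχ] at hχb
  linarith [ha h hah]

theorem NovikovCond.conv (hχ : ∀ g h : G, χ (g * h) = χ g + χ h)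
    (ha : NovikovCond χ a) (hb : NovikovCond χ b) : NovikovCond χ (novConv a b) := fun r => by
  obtain ⟨A, hA⟩ := ha.exists_supportedBelow
  obtain ⟨B, hB⟩ := hb.exists_supportedBelow
  refine ((ha (r - B)).image2 (· * ·) (hb (r - A))).subset fun g ⟨hg, hr⟩ => ?_
  obtain ⟨h, hah, hbh⟩ := exists_ne_zero_of_novConv_ne_zero hg
  have hχh := hA h hah
  have hχk := hB _ hbh
  rw [map_inv_mul_eq_sub hχ] at hχk
  exact ⟨h, ⟨hah, by linarith⟩, _, ⟨hbh, by rw [map_inv_mul_eq_sub hχ]; linarith⟩,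
    mul_inv_cancel_left h g⟩

theorem novOne_novConv (a : G → ℤ) : novConv novOne a = a := by
  funext g
  rw [novConv_apply, finsum_eq_single _ 1 fun h hh => by simp [novOne, hh]]
  simp [novOne]

theorem novConv_novOne (a : G → ℤ) : novConv a novOne = a := by
  funext g
  rw [novConv_apply, finsum_eq_single _ g fun h hh => by simp [novOne, inv_mul_eq_one, hh]]
  simp [novOne]

theorem sub_novConv (hχ : ∀ g h : G, χ (g * h) = χ g + χ h)
    (ha : NovikovCond χ a) (hb : NovikovCond χ b) (hz : NovikovCond χ z) :
    novConv (a - b) z = novConv a z - novConv b z := by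
  funext g
  obtain ⟨C, hC⟩ := hz.exists_supportedBelow
  simp only [novConv_apply, Pi.sub_apply, sub_mul]
  exact finsum_sub_distrib (ha.finite_support_novConv_summand hχ hC g)
    (hb.finite_support_novConv_summand hχ hC g)

theorem novConv_sub (hχ : ∀ g h : G, χ (g * h) = χ g + χ h)
    (hz : NovikovCond χ z) (ha : NovikovCond χ a) (hb : NovikovCond χ b) :
    novConv z (a - b) = novConv z a - novConv z b := by
  funext g
  obtain ⟨A, hA⟩ := ha.exists_supportedBelow
  obtain ⟨B, hB⟩ := hb.exists_supportedBelow
  simp only [novConv_apply, Pi.sub_apply, mul_sub]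
  exact finsum_sub_distrib (hz.finite_support_novConv_summand hχ hA g)
    (hz.finite_support_novConv_summand hχ hB g)

theorem novConv_assoc (hχ : ∀ g h : G, χ (g * h) = χ g + χ h)
    (ha : NovikovCond χ a) (hb : NovikovCond χ b) (hz : NovikovCond χ z) :
    novConv (novConv a b) z = novConv a (novConv b z) := by
  funext g
  obtain ⟨A, hA⟩ := ha.exists_supportedBelow
  obtain ⟨B, hB⟩ := hb.exists_supportedBelow
  obtain ⟨C, hC⟩ := hz.exists_supportedBelow
  have hfin : (support (uncurry fun k h => a h * b (h⁻¹ * k) * z (k⁻¹ * g))).Finite := by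
    refine (((ha (χ g - B - C)).prod (hb (χ g - A - C))).image fun p => (p.1 * p.2, p.1)).subset
      fun ⟨k, h⟩ hkh => ?_
    simp only [mem_support, uncurry_apply_pair, mul_ne_zero_iff] at hkh
    obtain ⟨⟨hah, hbh⟩, hzk⟩ := hkh
    have hχh := hA _ hah
    have hχhk := hB _ hbh
    have hχkg := hC _ hzk
    rw [map_inv_mul_eq_sub hχ] at hχhk hχkg
    refine ⟨(h, h⁻¹ * k), ⟨⟨hah, by linarith⟩, hbh, ?_⟩, by simp⟩
    rw [map_inv_mul_eq_sub hχ]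
    linarith
  calc novConv (novConv a b) z g = ∑ᶠ k, ∑ᶠ h, a h * b (h⁻¹ * k) * z (k⁻¹ * g) := by
        simp only [novConv_apply, finsum_mul]
    _ = ∑ᶠ h, ∑ᶠ m, a h * b (h⁻¹ * (h * m)) * z ((h * m)⁻¹ * g) := by
        rw [finsum_comm_of_finite _ hfin]
        exact finsum_congr fun h => (finsum_comp_equiv (Equiv.mulLeft h)).symm
    _ = novConv a (novConv b z) g := by
        simp only [novConv_apply, mul_finsum, inv_mul_cancel_left, mul_inv_rev, mul_assoc]

noncomputable def novPow (a : G → ℤ) : ℕ → G → ℤ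
  | 0 => novOne
  | n + 1 => novConv a (novPow a n)

theorem NovikovCond.pow (hχ : ∀ g h : G, χ (g * h) = χ g + χ h) (ha : NovikovCond χ a) :
    ∀ n, NovikovCond χ (novPow a n)
  | 0 => novikovCond_novOne
  | n + 1 => ha.conv hχ (ha.pow hχ n)

theorem SupportedBelow.pow (hχ : ∀ g h : G, χ (g * h) = χ g + χ h)
    (ha : SupportedBelow χ c a) : ∀ n : ℕ, SupportedBelow χ (n * c) (novPow a n)
  | 0 => by simpa [novPow] using supportedBelow_novOne hχ
  | n + 1 => (ha.conv hχ (ha.pow hχ n)).mono (by push_cast; linarith)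

theorem SupportedBelow.finite_setOf_novPow_ne_zero (hχ : ∀ g h : G, χ (g * h) = χ g + χ h)
    (ha : SupportedBelow χ c a) (hc : c < 0) (g : G) : {n | novPow a n g ≠ 0}.Finite :=
  (Nat.finite_setOf_le_mul_of_neg hc (χ g)).subset fun n hn => ha.pow hχ n g hn

noncomputable def novGeomSeries (a : G → ℤ) : G → ℤ :=
  fun g => ∑ᶠ n, novPow a n g

theorem NovikovCond.geomSeries (hχ : ∀ g h : G, χ (g * h) = χ g + χ h)
    (ha : NovikovCond χ a) (hac : SupportedBelow χ c a) (hc : c < 0) :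
    NovikovCond χ (novGeomSeries a) := fun r =>
  ((Nat.finite_setOf_le_mul_of_neg hc r).biUnion fun n _ => ha.pow hχ n r).subset
    fun g ⟨hg, hr⟩ => by
      obtain ⟨n, hn⟩ := not_forall.mp (mt finsum_eq_zero_of_forall_eq_zero hg)
      exact Set.mem_biUnion (hr.trans (hac.pow hχ n g hn)) ⟨hn, hr⟩

theorem novConv_novGeomSeries (hχ : ∀ g h : G, χ (g * h) = χ g + χ h)
    (ha : NovikovCond χ a) (hac : SupportedBelow χ c a) (hc : c < 0) :
    novConv a (novGeomSeries a) = novGeomSeries a - novOne := by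
  funext g
  obtain ⟨A, hA⟩ := ha.exists_supportedBelow
  have hfin : (support (uncurry fun h n => a h * novPow a n (h⁻¹ * g))).Finite := by
    refine ((ha (χ g)).prod (Nat.finite_setOf_le_mul_of_neg hc (χ g - A))).subset
      fun ⟨h, n⟩ hhn => ?_
    simp only [mem_support, uncurry_apply_pair, mul_ne_zero_iff] at hhn
    obtain ⟨hah, hn⟩ := hhn
    have hχh := hA _ hah
    have hχn := hac.pow hχ n _ hn
    have hnc : (n : ℝ) * c ≤ 0 := mul_nonpos_of_nonneg_of_nonpos n.cast_nonneg hc.le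
    rw [map_inv_mul_eq_sub hχ] at hχn
    exact ⟨⟨hah, by linarith⟩, by simp only [Set.mem_ofPred_eq]; linarith⟩
  calc novConv a (novGeomSeries a) g = ∑ᶠ h, ∑ᶠ n, a h * novPow a n (h⁻¹ * g) := by
        simp only [novConv_apply, novGeomSeries, mul_finsum]
    _ = ∑ᶠ n, novPow a (n + 1) g := by
        rw [finsum_comm_of_finite _ hfin]
        simp only [novPow, novConv_apply]
    _ = novGeomSeries a g - novOne g := by
        rw [novGeomSeries, finsum_nat_eq_zero_add _ (hac.finite_setOf_novPow_ne_zero hχ hc g)]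
        simp [novPow]

theorem NovikovCond.supportedBelow_of_eq_add_novConv (hχ : ∀ g h : G, χ (g * h) = χ g + χ h)
    (hv : NovikovCond χ v) (hac : SupportedBelow χ c a) (hc : c < 0)
    (hw : SupportedBelow χ d w) (h : v = w + novConv a v) : SupportedBelow χ d v := by
  intro g hg
  by_contra! hgd
  obtain ⟨g₀, ⟨hg₀, hgg₀⟩, hmax⟩ := (hv (χ g)).exists_maximalFor χ _ ⟨g, hg, le_rfl⟩
  have hw₀ : w g₀ = 0 := by
    by_contra hw₀
    linarith [hw g₀ hw₀]
  have hconv₀ : novConv a v g₀ = 0 := by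
    by_contra hconv₀
    obtain ⟨k, hak, hvk⟩ := exists_ne_zero_of_novConv_ne_zero hconv₀
    have hχk := hac k hak
    have hle := hmax (j := k⁻¹ * g₀)
    simp only [Set.mem_ofPred_eq, map_inv_mul_eq_sub hχ] at hle
    linarith [hle ⟨hvk, by linarith⟩ (by linarith)]
  exact hg₀ (by rw [h, Pi.add_apply, hw₀, hconv₀, add_zero])

theorem NovikovCond.eq_zero_of_novConv_eq_self (hχ : ∀ g h : G, χ (g * h) = χ g + χ h)
    (hv : NovikovCond χ v) (hac : SupportedBelow χ c a) (hc : c < 0) (h : novConv a v = v) :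
    v = 0 := by
  funext g
  by_contra hg
  have hzero : SupportedBelow χ (χ g - 1) (0 : G → ℤ) := fun _ h0 => (h0 rfl).elim
  have hχg := hv.supportedBelow_of_eq_add_novConv hχ hac hc hzero (by rw [zero_add, h]) g hg
  linarith

theorem one_sub_novConv (hχ : ∀ g h : G, χ (g * h) = χ g + χ h)
    (ha : NovikovCond χ a) (hv : NovikovCond χ v) :
    novConv (novOne - a) v = v - novConv a v := by
  rw [sub_novConv hχ novikovCond_novOne ha hv, novOne_novConv]

theorem novConv_one_sub_one_sub (hχ : ∀ g h : G, χ (g * h) = χ g + χ h)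
    (ha : NovikovCond χ a) (hb : NovikovCond χ b) :
    novConv (novOne - a) (novOne - b) = novOne - (a + b - novConv a b) := by
  rw [one_sub_novConv hχ ha (novikovCond_novOne.sub hb),
    novConv_sub hχ ha novikovCond_novOne hb, novConv_novOne]
  abel

theorem novConv_one_sub_eq_novOne_symm (hχ : ∀ g h : G, χ (g * h) = χ g + χ h)
    (ha : NovikovCond χ a) (hac : SupportedBelow χ c a) (hc : c < 0) (hv : NovikovCond χ v)
    (huv : novConv (novOne - a) v = novOne) : novConv v (novOne - a) = novOne := by
  have hu := novikovCond_novOne.sub ha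
  have hw : NovikovCond χ (novConv v (novOne - a) - novOne) :=
    (hv.conv hχ hu).sub novikovCond_novOne
  have hker : novConv (novOne - a) (novConv v (novOne - a) - novOne) = 0 := by
    rw [novConv_sub hχ hu (hv.conv hχ hu) novikovCond_novOne, ← novConv_assoc hχ hu hv hu, huv,
      novOne_novConv, novConv_novOne, sub_self]
  rw [one_sub_novConv hχ ha hw, sub_eq_zero] at hker
  exact sub_eq_zero.mp (hw.eq_zero_of_novConv_eq_self hχ hac hc hker.symm)

theorem NovikovCond.novNorm_lt_one_iff (ha : NovikovCond χ a) :
    novNorm χ a < 1 ↔ ∃ c < 0, SupportedBelow χ c a := by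
  rcases eq_or_ne a 0 with rfl | ha0
  · simp only [novNorm, if_pos, zero_lt_one, true_iff]
    exact ⟨-1, neg_one_lt_zero, fun _ h => (h rfl).elim⟩
  obtain ⟨g₀, hg₀⟩ := Function.ne_iff.mp ha0
  obtain ⟨A, hA⟩ := ha.exists_supportedBelow
  have hbdd : BddAbove {x | ∃ g, a g ≠ 0 ∧ χ g = x} := ⟨A, by rintro _ ⟨g, hg, rfl⟩; exact hA g hg⟩
  rw [novNorm, if_neg ha0, Real.exp_lt_one_iff]
  constructor
  · exact fun hneg => ⟨_, hneg, fun g hg => le_csSup hbdd ⟨g, hg, rfl⟩⟩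
  · rintro ⟨c, hc, hac⟩
    refine lt_of_le_of_lt (csSup_le ⟨χ g₀, g₀, hg₀, rfl⟩ ?_) hc
    rintro _ ⟨g, hg, rfl⟩
    exact hac g hg

theorem mem_novSmallUnits_iff {u : G → ℤ} :
    u ∈ novSmallUnits χ ↔
      NovikovCond χ (novOne - u) ∧ ∃ c < 0, SupportedBelow χ c (novOne - u) := by
  constructor
  · rintro ⟨a, ha, hna, rfl⟩
    rw [sub_sub_cancel]
    exact ⟨ha, ha.novNorm_lt_one_iff.mp hna⟩
  · rintro ⟨ha, hac⟩
    exact ⟨_, ha, ha.novNorm_lt_one_iff.mpr hac, (sub_sub_cancel _ _).symm⟩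

theorem novConv_one_sub_novGeomSeries (hχ : ∀ g h : G, χ (g * h) = χ g + χ h)
    (ha : NovikovCond χ a) (hac : SupportedBelow χ c a) (hc : c < 0) :
    novConv (novOne - a) (novGeomSeries a) = novOne := by
  rw [one_sub_novConv hχ ha (ha.geomSeries hχ hac hc), novConv_novGeomSeries hχ ha hac hc,
    sub_sub_cancel]

theorem novConv_mem_novSmallUnits (hχ : ∀ g h : G, χ (g * h) = χ g + χ h) {u v : G → ℤ}
    (hu : u ∈ novSmallUnits χ) (hv : v ∈ novSmallUnits χ) : novConv u v ∈ novSmallUnits χ := by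
  obtain ⟨a, ha, hna, rfl⟩ := hu
  obtain ⟨b, hb, hnb, rfl⟩ := hv
  obtain ⟨c, hc, hac⟩ := ha.novNorm_lt_one_iff.mp hna
  obtain ⟨d, hd, hbd⟩ := hb.novNorm_lt_one_iff.mp hnb
  have hac' := hac.mono (le_max_left c d)
  have hbd' := hbd.mono (le_max_right c d)
  have hmax : max c d < 0 := max_lt hc hd
  rw [novConv_one_sub_one_sub hχ ha hb, mem_novSmallUnits_iff, sub_sub_cancel]
  exact ⟨(ha.add hb).sub (ha.conv hχ hb), max c d, hmax,
    (hac'.add hbd').sub ((hac'.conv hχ hbd').mono (by linarith))⟩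

theorem mem_novSmallUnits_of_novConv_eq_novOne (hχ : ∀ g h : G, χ (g * h) = χ g + χ h)
    {u v : G → ℤ} (hu : u ∈ novSmallUnits χ) (hv : NovikovCond χ v)
    (huv : novConv u v = novOne) : v ∈ novSmallUnits χ := by
  obtain ⟨a, ha, hna, rfl⟩ := hu
  obtain ⟨c, hc, hac⟩ := ha.novNorm_lt_one_iff.mp hna
  rw [one_sub_novConv hχ ha hv] at huv
  have hv0 : SupportedBelow χ 0 v :=
    hv.supportedBelow_of_eq_add_novConv hχ hac hc (supportedBelow_novOne hχ)
      (by rw [← huv, sub_add_cancel])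
  have hsmall : novOne - v = -novConv a v := by rw [← huv]; abel
  rw [mem_novSmallUnits_iff, hsmall]
  exact ⟨(ha.conv hχ hv).neg, c, hc, by simpa using (hac.conv hχ hv0).neg⟩

end Novikov

/-- The set `{1 − a | ‖a‖ < 1}` is a subgroup of the group of
units of `ℤG^_χ`: its elements are units of the Novikov ring, it contains `1`,
it is closed under multiplication, and it is closed under taking inverses. -/
theorem statement6 [Group G] (χ : G → ℝ) (hχ : ∀ a b : G, χ (a * b) = χ a + χ b) :
    -- elements are units of the Novikov ring
    (∀ u ∈ novSmallUnits χ, NovikovCond χ u ∧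
        ∃ v : G → ℤ, NovikovCond χ v ∧ novConv u v = novOne ∧ novConv v u = novOne) ∧
    -- contains 1
    novOne ∈ novSmallUnits χ ∧
    -- closed under multiplication
    (∀ u ∈ novSmallUnits χ, ∀ v ∈ novSmallUnits χ, novConv u v ∈ novSmallUnits χ) ∧
    -- closed under taking inverses
    (∀ u ∈ novSmallUnits χ, ∀ v : G → ℤ, NovikovCond χ v →
        novConv u v = novOne → novConv v u = novOne → v ∈ novSmallUnits χ) := by
  refine ⟨?_, ⟨0, novikovCond_zero, by simp [novNorm], (sub_zero _).symm⟩,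
    fun u hu v hv => novConv_mem_novSmallUnits hχ hu hv,
    fun u hu v hv huv _ => mem_novSmallUnits_of_novConv_eq_novOne hχ hu hv huv⟩
  rintro u ⟨a, ha, hna, rfl⟩
  obtain ⟨c, hc, hac⟩ := ha.novNorm_lt_one_iff.mp hna
  have huv := novConv_one_sub_novGeomSeries hχ ha hac hc
  have hv := ha.geomSeries hχ hac hc
  exact ⟨novikovCond_novOne.sub ha, _, hv, huv, novConv_one_sub_eq_novOne_symm hχ ha hac hc hv huv⟩
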